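/- Suppose in addition that there are real numbers s and t with t ≠ 0 such that s_i = s and t_i = t for all i ≥ 1. Fix real numbers α and β, and for n ≥ 1 set D_n := t_0^{−(n−1)}·t^{−(n−1)(n−2)/2} · det(αβ·m_{i+j} + (α+β)·m_{i+j+1} + m_{i+j+2})_{i,j=0}^{n−1}. Then the sequence (D_n) satisfies a linear recurrence of order 4 with constant coefficients: there exist real numbers c_1, c_2, c_3, c_4 (independent of n) such that D_n = c_1·D_{n−1} + c_2·D_{n−2} + c_3·D_{n−3} + c_4·D_{n−4} for all n ≥ 5. -/
import Mathlib


/-- `motzkinGF s t n k` is the weighted Motzkin path generating function `m(n,k)`. -/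
def motzkinGF (s t : ℕ → ℝ) : ℕ → ℤ → ℝ
  | 0, k => if k = 0 then 1 else 0
  | n+1, k =>
      if k < 0 then 0
      else motzkinGF s t n (k-1) + s k.toNat * motzkinGF s t n k
             + t k.toNat * motzkinGF s t n (k+1)

/-- The scaled Hankel determinant
`D_n = t_0^{-(n-1)} t^{-(n-1)(n-2)/2} det(αβ m_{i+j} + (α+β) m_{i+j+1} + m_{i+j+2})_{i,j=0}^{n-1}`. -/
noncomputable def scaledHankel3 (s t : ℕ → ℝ) (tc α β : ℝ) (n : ℕ) : ℝ :=
  (t 0) ^ (-((n : ℤ) - 1)) * tc ^ (-(((n - 1).choose 2 : ℕ) : ℤ))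
    * Matrix.det (Matrix.of fun i j : Fin n =>
        α * β * motzkinGF s t ((i : ℕ) + (j : ℕ)) 0
          + (α + β) * motzkinGF s t ((i : ℕ) + (j : ℕ) + 1) 0
          + motzkinGF s t ((i : ℕ) + (j : ℕ) + 2) 0)

namespace CK

variable (s t : ℕ → ℝ)

/-- `m(n,k)` with natural-number height. -/
noncomputable def Mn (n k : ℕ) : ℝ := motzkinGF s t n (k : ℤ)

lemma Mn_zero (k : ℕ) : Mn s t 0 k = if k = 0 then 1 else 0 := by
  simp [Mn, motzkinGF]

lemma Mn_succ_zero (n : ℕ) :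
    Mn s t (n+1) 0 = s 0 * Mn s t n 0 + t 0 * Mn s t n 1 := by
  show motzkinGF s t (n+1) ((0:ℕ):ℤ) = _
  rw [motzkinGF]
  have h0 : ((0:ℕ):ℤ) = (0:ℤ) := by norm_num
  rw [h0, if_neg (by norm_num)]
  have : motzkinGF s t n ((0:ℤ)-1) = 0 := by
    rw [motzkinGF.eq_def]; cases n <;> simp
  rw [this]
  simp [Mn]

lemma Mn_succ_succ (n k : ℕ) :
    Mn s t (n+1) (k+1)
      = Mn s t n k + s (k+1) * Mn s t n (k+1) + t (k+1) * Mn s t n (k+2) := by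
  show motzkinGF s t (n+1) ((k+1:ℕ):ℤ) = _
  rw [motzkinGF, if_neg (by push_cast; omega)]
  have h1 : ((k+1:ℕ):ℤ) - 1 = ((k:ℕ):ℤ) := by push_cast; ring
  have h2 : ((k+1:ℕ):ℤ) + 1 = ((k+2:ℕ):ℤ) := by push_cast; ring
  have h3 : (((k+1:ℕ):ℤ)).toNat = k+1 := by simp
  rw [h1, h2, h3]
  rfl

lemma Mn_eq_zero {n k : ℕ} (h : n < k) : Mn s t n k = 0 := by
  induction n generalizing k with
  | zero => rw [Mn_zero, if_neg (by omega)]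
  | succ n ih =>
      obtain ⟨k, rfl⟩ : ∃ k', k = k' + 1 := ⟨k - 1, by omega⟩
      rw [Mn_succ_succ, ih (by omega), ih (by omega), ih (by omega)]
      ring

lemma Mn_diag (n : ℕ) : Mn s t n n = 1 := by
  induction n with
  | zero => simp [Mn_zero]
  | succ n ih =>
      rw [Mn_succ_succ, ih, Mn_eq_zero s t (by omega), Mn_eq_zero s t (by omega)]
      ring

/-- `h_k = t_0 t_1 ⋯ t_{k-1}`. -/
noncomputable def hp (k : ℕ) : ℝ := ∏ l ∈ Finset.range k, t l

lemma hp_succ (k : ℕ) : hp t (k+1) = hp t k * t k := Finset.prod_range_succ t k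

lemma expand (i N : ℕ) (W : ℕ → ℝ) :
    ∑ k ∈ Finset.range (N+1), Mn s t (i+1) k * W k
      = (∑ k ∈ Finset.range (N+1), (s k * Mn s t i k + t k * Mn s t i (k+1)) * W k)
        + ∑ k ∈ Finset.range N, Mn s t i k * W (k+1) := by
  rw [Finset.sum_range_succ' (fun k => Mn s t (i+1) k * W k) N,
      Finset.sum_range_succ' (fun k => (s k * Mn s t i k + t k * Mn s t i (k+1)) * W k) N]
  simp only [Mn_succ_succ, Mn_succ_zero]
  rw [show (∑ k ∈ Finset.range N,
        (Mn s t i k + s (k+1) * Mn s t i (k+1) + t (k+1) * Mn s t i (k+2)) * W (k+1))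
      = ∑ k ∈ Finset.range N,
        ((s (k+1) * Mn s t i (k+1) + t (k+1) * Mn s t i (k+2)) * W (k+1)
          + Mn s t i k * W (k+1)) from Finset.sum_congr rfl (fun k _ => by ring),
     Finset.sum_add_distrib]
  ring

lemma swap (i j N : ℕ) (hi : i + 1 ≤ N) (hj : j + 1 ≤ N) :
    ∑ k ∈ Finset.range (N+1), Mn s t (i+1) k * (Mn s t j k * hp t k)
      = ∑ k ∈ Finset.range (N+1), Mn s t (j+1) k * (Mn s t i k * hp t k) := by
  rw [expand s t i N (fun k => Mn s t j k * hp t k),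
      expand s t j N (fun k => Mn s t i k * hp t k),
      Finset.sum_range_succ (fun k => (s k * Mn s t i k + t k * Mn s t i (k+1)) * (Mn s t j k * hp t k)) N,
      Finset.sum_range_succ (fun k => (s k * Mn s t j k + t k * Mn s t j (k+1)) * (Mn s t i k * hp t k)) N,
      Mn_eq_zero s t (show j < N by omega), Mn_eq_zero s t (show i < N by omega)]
  simp only [mul_zero, zero_mul, add_zero]
  rw [← Finset.sum_add_distrib, ← Finset.sum_add_distrib]
  refine Finset.sum_congr rfl (fun k _ => ?_)
  rw [hp_succ]
  ring

lemma main_sum (i j N : ℕ) (h : i + j + 2 ≤ N) :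
    Mn s t (i+j) 0 = ∑ k ∈ Finset.range N, Mn s t i k * Mn s t j k * hp t k := by
  induction i generalizing j with
  | zero =>
      rw [Finset.sum_eq_single_of_mem 0 (Finset.mem_range.2 (by omega))
        (fun k _ hk => by rw [Mn_zero, if_neg hk]; ring)]
      rw [Mn_zero, if_pos rfl, zero_add]
      simp [hp]
  | succ i ih =>
      obtain ⟨N', rfl⟩ : ∃ N', N = N' + 1 := ⟨N - 1, by omega⟩
      rw [show i + 1 + j = i + (j + 1) by ring, ih (j+1) (by omega)]
      have hs := swap s t j i N' (by omega) (by omega)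
      calc ∑ k ∈ Finset.range (N'+1), Mn s t i k * Mn s t (j+1) k * hp t k
          = ∑ k ∈ Finset.range (N'+1), Mn s t (j+1) k * (Mn s t i k * hp t k) :=
            Finset.sum_congr rfl (fun k _ => by ring)
        _ = ∑ k ∈ Finset.range (N'+1), Mn s t (i+1) k * (Mn s t j k * hp t k) := hs
        _ = ∑ k ∈ Finset.range (N'+1), Mn s t (i+1) k * Mn s t j k * hp t k :=
            Finset.sum_congr rfl (fun k _ => by ring)
/-- Tridiagonal matrix with subdiagonal `l`, diagonal `d`, superdiagonal `u`. -/
def trid (d u l : ℕ → ℝ) (n : ℕ) : Matrix (Fin n) (Fin n) ℝ :=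
  Matrix.of fun i j =>
    if (i:ℕ) = (j:ℕ)+1 then l j
    else if (j:ℕ) = (i:ℕ)+1 then u i
    else if (i:ℕ) = (j:ℕ) then d j else 0

/-- Continuant. -/
noncomputable def cont (d u l : ℕ → ℝ) : ℕ → ℝ
  | 0 => 1
  | 1 => d 0
  | (n+2) => d (n+1) * cont d u l (n+1) - u n * l n * cont d u l n

lemma det_trid (d u l : ℕ → ℝ) (n : ℕ) : (trid d u l n).det = cont d u l n := by
  induction n using Nat.strong_induction_on with
  | _ n ih =>
    match n with
    | 0 => simp [cont, Matrix.det_fin_zero]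
    | 1 => simp [cont, Matrix.det_fin_one, trid]
    | (n+2) =>
      rw [Matrix.det_succ_row (trid d u l (n+2)) (Fin.last (n+1))]
      rw [Fin.sum_univ_castSucc, Fin.sum_univ_castSucc]
      have hsum0 : (∑ j : Fin n, (-1 : ℝ) ^ ((Fin.last (n+1) : ℕ) + ((j.castSucc.castSucc : Fin (n+2)) : ℕ))
            * trid d u l (n+2) (Fin.last (n+1)) j.castSucc.castSucc
            * ((trid d u l (n+2)).submatrix (Fin.last (n+1)).succAbove
                (j.castSucc.castSucc).succAbove).det) = 0 := by
        refine Finset.sum_eq_zero fun j _ => ?_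
        have hj : (j:ℕ) < n := j.isLt
        have hz : trid d u l (n+2) (Fin.last (n+1)) j.castSucc.castSucc = 0 := by
          simp only [trid, Matrix.of_apply, Fin.coe_castSucc, Fin.val_last]
          rw [if_neg (by omega), if_neg (by omega), if_neg (by omega)]
        rw [hz]; ring
      rw [hsum0, zero_add]
      -- the two surviving terms
      have e1 : trid d u l (n+2) (Fin.last (n+1)) (Fin.last n).castSucc = l n := by
        simp only [trid, Matrix.of_apply, Fin.coe_castSucc, Fin.val_last]
        simp
      have e2 : trid d u l (n+2) (Fin.last (n+1)) (Fin.last (n+1)) = d (n+1) := by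
        simp only [trid, Matrix.of_apply, Fin.val_last]
        rw [if_neg (by omega), if_neg (by omega)]
        simp
      have sign1 : ((-1 : ℝ) ^ ((Fin.last (n+1) : ℕ) + (((Fin.last n).castSucc : Fin (n+2)) : ℕ))) = -1 := by
        simp only [Fin.val_last, Fin.coe_castSucc]
        exact Odd.neg_one_pow ⟨n, by ring⟩
      have sign2 : ((-1 : ℝ) ^ ((Fin.last (n+1) : ℕ) + ((Fin.last (n+1)) : ℕ))) = 1 := by
        simp only [Fin.val_last]
        exact Even.neg_one_pow ⟨n+1, by ring⟩
      have minor2 : (trid d u l (n+2)).submatrix (Fin.last (n+1)).succAbove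
          (Fin.last (n+1)).succAbove = trid d u l (n+1) := by
        ext i j
        simp [Fin.succAbove_last, trid]
      -- the inner minor
      set X := (trid d u l (n+2)).submatrix (Fin.last (n+1)).succAbove
          ((Fin.last n).castSucc : Fin (n+2)).succAbove with hX
      have hXdet : X.det = u n * cont d u l n := by
        rw [Matrix.det_succ_column X (Fin.last n)]
        rw [Fin.sum_univ_castSucc]
        have hcol : ∀ r : Fin (n+1), X r (Fin.last n)
            = trid d u l (n+2) ((Fin.last (n+1)).succAbove r) (Fin.last (n+1)) := by
          intro r
          have : ((Fin.last n).castSucc : Fin (n+2)).succAbove (Fin.last n) = Fin.last (n+1) := by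
            rw [Fin.succAbove]
            rw [if_neg (by simp [Fin.lt_def])]
            rfl
          rw [hX, Matrix.submatrix_apply, this]
        have hz2 : ∀ r : Fin n, X r.castSucc (Fin.last n) = 0 := by
          intro r
          rw [hcol]
          have hr : ((Fin.last (n+1)).succAbove r.castSucc : ℕ) = (r : ℕ) := by
            simp [Fin.succAbove_last]
          simp only [trid, Matrix.of_apply, hr, Fin.val_last]
          have : (r:ℕ) < n := r.isLt
          rw [if_neg (by omega), if_neg (by omega), if_neg (by omega)]
        have hsum0' : (∑ r : Fin n, (-1 : ℝ) ^ (((r.castSucc : Fin (n+1)) : ℕ) + ((Fin.last n) : ℕ))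
              * X r.castSucc (Fin.last n)
              * (X.submatrix (r.castSucc).succAbove (Fin.last n).succAbove).det) = 0 :=
          Finset.sum_eq_zero fun r _ => by rw [hz2 r]; ring
        rw [hsum0', zero_add]
        have ecorner : X (Fin.last n) (Fin.last n) = u n := by
          rw [hcol]
          have hr : ((Fin.last (n+1)).succAbove (Fin.last n) : ℕ) = n := by
            simp [Fin.succAbove_last]
          simp only [trid, Matrix.of_apply, hr, Fin.val_last]
          rw [if_neg (by omega)]
          simp
        have signc : ((-1 : ℝ) ^ (((Fin.last n) : ℕ) + ((Fin.last n) : ℕ))) = 1 := by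
          simp only [Fin.val_last]
          exact Even.neg_one_pow ⟨n, by ring⟩
        have minorc : X.submatrix (Fin.last n).succAbove (Fin.last n).succAbove
            = trid d u l n := by
          ext i j
          rw [Matrix.submatrix_apply, Fin.succAbove_last, hX, Matrix.submatrix_apply]
          have hrow : ((Fin.last (n+1)).succAbove i.castSucc : ℕ) = (i : ℕ) := by
            simp [Fin.succAbove_last]
          have hcolv : (((Fin.last n).castSucc : Fin (n+2)).succAbove
              j.castSucc : ℕ) = (j : ℕ) := by
            rw [Fin.succAbove]
            rw [if_pos (by simp [Fin.lt_def])]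
            simp
          simp only [trid, Matrix.of_apply, hrow, hcolv]
        rw [ecorner, signc, minorc, ih n (by omega)]
        ring
      rw [e1, e2, sign1, sign2, minor2, hXdet, ih (n+1) (by omega)]
      show (-1) * l n * (u n * cont d u l n) + 1 * d (n+1) * cont d u l (n+1) = cont d u l (n+2)
      rw [cont]
      ring


lemma fin_sum_indicator {n : ℕ} (g : ℕ → ℝ) (c : ℕ) (v : ℝ) :
    (∑ l : Fin n, g l * (if (l:ℕ) = c then v else 0)) = if c < n then g c * v else 0 := by
  by_cases h : c < n
  · rw [if_pos h,
      Finset.sum_eq_single_of_mem (⟨c, h⟩ : Fin n) (Finset.mem_univ _)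
        (fun l _ hl => by
          rw [if_neg (fun hv => hl (Fin.ext hv)), mul_zero])]
    rw [if_pos rfl]
  · rw [if_neg h]
    refine Finset.sum_eq_zero fun l _ => ?_
    have : (l:ℕ) ≠ c := by have := l.isLt; omega
    rw [if_neg this, mul_zero]

/-- the matrices -/
noncomputable def Fm (α : ℝ) (n : ℕ) : Matrix (Fin n) (Fin n) ℝ :=
  Matrix.of fun i k => α * Mn s t (i:ℕ) (k:ℕ) + Mn s t ((i:ℕ)+1) (k:ℕ)

noncomputable def Mm (n : ℕ) : Matrix (Fin n) (Fin n) ℝ :=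
  Matrix.of fun i k => Mn s t (i:ℕ) (k:ℕ)

noncomputable def Tm (α : ℝ) (n : ℕ) : Matrix (Fin n) (Fin n) ℝ :=
  trid (fun k => α + s k) (fun _ => 1) t n

noncomputable def phi (α : ℝ) : ℕ → ℝ := cont (fun k => α + s k) (fun _ => 1) t

lemma Fm_eq (α : ℝ) (n : ℕ) : Fm s t α n = Mm s t n * Tm s t α n := by
  ext i k
  rw [Matrix.mul_apply]
  have hsplit : ∀ l : Fin n, Mm s t n i l * Tm s t α n l k
      = Mn s t (i:ℕ) (l:ℕ) * (if (l:ℕ) = (k:ℕ)+1 then t (k:ℕ) else 0)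
        + Mn s t (i:ℕ) (l:ℕ) * (if (k:ℕ) = (l:ℕ)+1 then (1:ℝ) else 0)
        + Mn s t (i:ℕ) (l:ℕ) * (if (l:ℕ) = (k:ℕ) then α + s (k:ℕ) else 0) := by
    intro l
    simp only [Mm, Tm, trid, Matrix.of_apply]
    split_ifs <;> first | omega | ring
  rw [Finset.sum_congr rfl (fun l _ => hsplit l)]
  rw [Finset.sum_add_distrib, Finset.sum_add_distrib]
  rw [fin_sum_indicator (Mn s t (i:ℕ)) ((k:ℕ)+1) (t (k:ℕ)),
      fin_sum_indicator (Mn s t (i:ℕ)) ((k:ℕ)) (α + s (k:ℕ)), if_pos k.isLt]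
  show α * Mn s t (i:ℕ) (k:ℕ) + Mn s t ((i:ℕ)+1) (k:ℕ) = _
  by_cases hk : (k:ℕ) = 0
  · have h2 : (∑ l : Fin n, Mn s t (i:ℕ) (l:ℕ) * (if (k:ℕ) = (l:ℕ)+1 then (1:ℝ) else 0)) = 0 := by
      refine Finset.sum_eq_zero fun l _ => ?_
      rw [if_neg (by omega), mul_zero]
    rw [h2, hk, Mn_succ_zero]
    by_cases h1 : (0:ℕ)+1 < n
    · rw [if_pos h1]; ring
    · rw [if_neg h1, Mn_eq_zero s t (show (i:ℕ) < 0+1 by have := i.isLt; omega)]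
      ring
  · obtain ⟨c, hc⟩ : ∃ c, (k:ℕ) = c + 1 := ⟨(k:ℕ)-1, by omega⟩
    have h2 : (∑ l : Fin n, Mn s t (i:ℕ) (l:ℕ) * (if (k:ℕ) = (l:ℕ)+1 then (1:ℝ) else 0))
        = Mn s t (i:ℕ) c := by
      rw [Finset.sum_congr rfl (fun l _ => by
        rw [show (if (k:ℕ) = (l:ℕ)+1 then (1:ℝ) else 0)
            = (if (l:ℕ) = c then (1:ℝ) else 0) by
          split_ifs <;> first | omega | ring])]
      rw [fin_sum_indicator (Mn s t (i:ℕ)) c 1, if_pos (show c < n by have := k.isLt; omega)]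
      ring
    rw [h2, hc, Mn_succ_succ]
    by_cases h1 : c+1+1 < n
    · rw [if_pos h1]; ring
    · rw [if_neg h1, Mn_eq_zero s t (show (i:ℕ) < c+2 by have := i.isLt; omega)]
      ring

lemma det_Mm (n : ℕ) : (Mm s t n).det = 1 := by
  rw [Matrix.det_of_lowerTriangular (Mm s t n)
    (fun i j hij => by
      simp only [Mm, Matrix.of_apply]
      exact Mn_eq_zero s t (show (i:ℕ) < (j:ℕ) from hij))]
  · exact Finset.prod_eq_one fun i _ => by
      simp only [Mm, Matrix.of_apply]; exact Mn_diag s t i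

lemma det_Fm (α : ℝ) (n : ℕ) : (Fm s t α n).det = phi s t α n := by
  rw [Fm_eq, Matrix.det_mul, det_Mm, one_mul, Tm, det_trid]
  rfl

/-- the Hankel-type matrix -/
noncomputable def Amat (α β : ℝ) (n : ℕ) : Matrix (Fin n) (Fin n) ℝ :=
  Matrix.of fun i j =>
    α * β * Mn s t ((i:ℕ)+(j:ℕ)) 0 + (α+β) * Mn s t ((i:ℕ)+(j:ℕ)+1) 0
      + Mn s t ((i:ℕ)+(j:ℕ)+2) 0

lemma Amat_entry (α β : ℝ) (n : ℕ) (i j : Fin n) :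
    Amat s t α β n i j
      = ∑ k ∈ Finset.range (n+1),
          (α * Mn s t (i:ℕ) k + Mn s t ((i:ℕ)+1) k)
            * (β * Mn s t (j:ℕ) k + Mn s t ((j:ℕ)+1) k) * hp t k := by
  have key : Amat s t α β n i j
      = ∑ k ∈ Finset.range (2*n+2),
          (α * Mn s t (i:ℕ) k + Mn s t ((i:ℕ)+1) k)
            * (β * Mn s t (j:ℕ) k + Mn s t ((j:ℕ)+1) k) * hp t k := by
    have hi := i.isLt
    have hj := j.isLt
    have e1 := main_sum s t (i:ℕ) (j:ℕ) (2*n+2) (by omega)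
    have e2 := main_sum s t ((i:ℕ)+1) (j:ℕ) (2*n+2) (by omega)
    have e3 := main_sum s t (i:ℕ) ((j:ℕ)+1) (2*n+2) (by omega)
    have e4 := main_sum s t ((i:ℕ)+1) ((j:ℕ)+1) (2*n+2) (by omega)
    have expand : ∀ k, (α * Mn s t (i:ℕ) k + Mn s t ((i:ℕ)+1) k)
            * (β * Mn s t (j:ℕ) k + Mn s t ((j:ℕ)+1) k) * hp t k
        = α * β * (Mn s t (i:ℕ) k * Mn s t (j:ℕ) k * hp t k)
          + α * (Mn s t (i:ℕ) k * Mn s t ((j:ℕ)+1) k * hp t k)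
          + (β * (Mn s t ((i:ℕ)+1) k * Mn s t (j:ℕ) k * hp t k)
          + Mn s t ((i:ℕ)+1) k * Mn s t ((j:ℕ)+1) k * hp t k) := fun k => by ring
    rw [Finset.sum_congr rfl (fun k _ => expand k), Finset.sum_add_distrib,
        Finset.sum_add_distrib, Finset.sum_add_distrib,
        ← Finset.mul_sum, ← Finset.mul_sum, ← Finset.mul_sum,
        ← e1, ← e2, ← e3, ← e4]
    simp only [Amat, Matrix.of_apply]
    rw [show (i:ℕ)+1+(j:ℕ) = (i:ℕ)+(j:ℕ)+1 by ring,
        show (i:ℕ)+((j:ℕ)+1) = (i:ℕ)+(j:ℕ)+1 by ring,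
        show (i:ℕ)+1+((j:ℕ)+1) = (i:ℕ)+(j:ℕ)+2 by ring]
    ring
  rw [key]
  refine (Finset.sum_subset (Finset.range_subset_range.2 (by omega)) fun k _ hk => ?_).symm
  have hk' : n+1 ≤ k := by
    by_contra hcon
    exact hk (Finset.mem_range.2 (by omega))
  have hi := i.isLt
  have hj := j.isLt
  rw [Mn_eq_zero s t (show (i:ℕ) < k by omega),
      Mn_eq_zero s t (show (i:ℕ)+1 < k by omega)]
  ring

/-- product of the `h_k` -/
noncomputable def Pp (n : ℕ) : ℝ := ∏ k ∈ Finset.range n, hp t k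

lemma master (α β : ℝ) (n : ℕ) :
    (Amat s t α β (n+1)).det
      = phi s t α (n+1) * phi s t β (n+1) * Pp t (n+1)
        + hp t (n+1) * (Amat s t α β n).det := by
  set B := Fm s t α (n+1) * Matrix.diagonal (fun k : Fin (n+1) => hp t (k:ℕ))
      * (Fm s t β (n+1)).transpose with hB
  have hBentry : ∀ i j : Fin (n+1), B i j
      = ∑ k ∈ Finset.range (n+1),
          (α * Mn s t (i:ℕ) k + Mn s t ((i:ℕ)+1) k)
            * (β * Mn s t (j:ℕ) k + Mn s t ((j:ℕ)+1) k) * hp t k := by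
    intro i j
    rw [hB, Matrix.mul_apply]
    simp only [Matrix.mul_diagonal, Matrix.transpose_apply, Fm, Matrix.of_apply]
    rw [Fin.sum_univ_eq_sum_range (fun k =>
      (α * Mn s t (i:ℕ) k + Mn s t ((i:ℕ)+1) k) * hp t k
        * (β * Mn s t (j:ℕ) k + Mn s t ((j:ℕ)+1) k)) (n+1)]
    exact Finset.sum_congr rfl fun k _ => by ring
  have hcorner : ∀ j : Fin (n+1),
      (α * Mn s t (n+1) (n+1) * 0 + (β * Mn s t (j:ℕ) (n+1) + Mn s t ((j:ℕ)+1) (n+1))) = 0 ∨ True := fun _ => Or.inr trivial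
  have hA : Amat s t α β (n+1)
      = Matrix.updateRow B (Fin.last n)
          (fun j => B (Fin.last n) j + (if (j:ℕ) = n then hp t (n+1) else 0)) := by
    ext i j
    rcases eq_or_ne i (Fin.last n) with rfl | hi
    · rw [Matrix.updateRow_self]
      rw [Amat_entry, Finset.sum_range_succ, hBentry]
      have hf : α * Mn s t ((Fin.last n : Fin (n+1)):ℕ) (n+1)
          + Mn s t (((Fin.last n : Fin (n+1)):ℕ)+1) (n+1) = 1 := by
        rw [Fin.val_last, Mn_eq_zero s t (by omega), Mn_diag]
        ring
      rw [hf]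
      have hj := j.isLt
      by_cases hjn : (j:ℕ) = n
      · have hg : β * Mn s t ((j:ℕ)) (n+1) + Mn s t ((j:ℕ)+1) (n+1) = 1 := by
          rw [hjn, Mn_eq_zero s t (by omega), Mn_diag]; ring
        rw [hg, if_pos hjn]
        ring
      · have hg : β * Mn s t ((j:ℕ)) (n+1) + Mn s t ((j:ℕ)+1) (n+1) = 0 := by
          rw [Mn_eq_zero s t (by omega), Mn_eq_zero s t (by omega)]; ring
        rw [hg, if_neg hjn]
        ring
    · rw [Matrix.updateRow_ne hi, Amat_entry, Finset.sum_range_succ, hBentry]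
      have hi' : (i:ℕ) < n := by
        have := i.isLt
        exact lt_of_le_of_ne (by omega) (fun h => hi (Fin.ext (by rw [h, Fin.val_last])))
      rw [Mn_eq_zero s t (show (i:ℕ) < n+1 by omega),
          Mn_eq_zero s t (show (i:ℕ)+1 < n+1 by omega)]
      ring
  have hBsub : B.submatrix Fin.castSucc Fin.castSucc = Amat s t α β n := by
    ext i j
    rw [Matrix.submatrix_apply, hBentry, Amat_entry]
    simp only [Fin.coe_castSucc]
  have hsingle : (fun j : Fin (n+1) => (if (j:ℕ) = n then hp t (n+1) else 0))
      = hp t (n+1) • (Pi.single (Fin.last n) (1:ℝ) : Fin (n+1) → ℝ) := by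
    funext j
    rw [Pi.smul_apply, Pi.single_apply, smul_eq_mul]
    by_cases hj : (j:ℕ) = n
    · rw [if_pos hj, if_pos (Fin.ext (by rw [hj, Fin.val_last]))]; ring
    · rw [if_neg hj, if_neg (fun h => hj (by rw [h, Fin.val_last]))]; ring
  have hdet1 : (Amat s t α β (n+1)).det
      = B.det + (Matrix.updateRow B (Fin.last n)
          (fun j => if (j:ℕ) = n then hp t (n+1) else 0)).det := by
    have hfun : (fun j : Fin (n+1) => B (Fin.last n) j + if (j:ℕ) = n then hp t (n+1) else 0)
        = B (Fin.last n) + (fun j : Fin (n+1) => if (j:ℕ) = n then hp t (n+1) else 0) := rfl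
    rw [hA, hfun, Matrix.det_updateRow_add, Matrix.updateRow_eq_self]
  have hdet2 : (Matrix.updateRow B (Fin.last n)
        (fun j => if (j:ℕ) = n then hp t (n+1) else 0)).det
      = hp t (n+1) * (Matrix.updateRow B (Fin.last n) (Pi.single (Fin.last n) (1:ℝ))).det := by
    rw [hsingle, Matrix.det_updateRow_smul]
  have hdet3 : (Matrix.updateRow B (Fin.last n) (Pi.single (Fin.last n) (1:ℝ))).det
      = (Amat s t α β n).det := by
    rw [← hBsub]
    rw [Matrix.det_succ_row _ (Fin.last n), Fin.sum_univ_castSucc]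
    have hz : ∀ j : Fin n,
        Matrix.updateRow B (Fin.last n) (Pi.single (Fin.last n) (1:ℝ)) (Fin.last n) j.castSucc = 0 := by
      intro j
      rw [Matrix.updateRow_self, Pi.single_apply,
        if_neg (Fin.ne_of_lt (Fin.castSucc_lt_last j))]
    rw [Finset.sum_eq_zero (fun j _ => by rw [hz j]; ring), zero_add]
    rw [Matrix.updateRow_self, Pi.single_apply, if_pos rfl]
    have heven : ((-1 : ℝ) ^ (((Fin.last n : Fin (n+1)) : ℕ) + ((Fin.last n : Fin (n+1)) : ℕ))) = 1 := by
      rw [Fin.val_last]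
      exact Even.neg_one_pow ⟨n, by ring⟩
    rw [heven]
    have hsub : (Matrix.updateRow B (Fin.last n) (Pi.single (Fin.last n) (1:ℝ))).submatrix
        (Fin.last n).succAbove (Fin.last n).succAbove = B.submatrix Fin.castSucc Fin.castSucc := by
      ext i j
      rw [Fin.succAbove_last, Matrix.submatrix_apply, Matrix.submatrix_apply,
        Matrix.updateRow_ne (Fin.ne_of_lt (Fin.castSucc_lt_last i))]
    rw [hsub]
    ring
  have hdetB : B.det = phi s t α (n+1) * phi s t β (n+1) * Pp t (n+1) := by
    rw [hB, Matrix.det_mul, Matrix.det_mul, Matrix.det_transpose, det_Fm, det_Fm,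
      Matrix.det_diagonal]
    rw [Fin.prod_univ_eq_prod_range (fun k => hp t k) (n+1)]
    rw [Pp]
    ring
  rw [hdet1, hdet2, hdet3, hdetB]

lemma phi_zero (α : ℝ) : phi s t α 0 = 1 := rfl

lemma phi_one (α : ℝ) : phi s t α 1 = α + s 0 := rfl

lemma phi_two (α : ℝ) : phi s t α 2 = (α + s 1) * (α + s 0) - t 0 := by
  show cont _ _ _ 2 = _
  rw [cont]
  show (α + s (0+1)) * cont _ _ _ (0+1) - 1 * t 0 * cont _ _ _ 0 = _
  rw [show (0+1 : ℕ) = 1 from rfl]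
  rw [show cont (fun k => α + s k) (fun _ => (1:ℝ)) t 1 = α + s 0 from rfl,
      show cont (fun k => α + s k) (fun _ => (1:ℝ)) t 0 = 1 from rfl]
  ring

lemma phi_rec (α : ℝ) (n : ℕ) :
    phi s t α (n+3) = (α + s (n+2)) * phi s t α (n+2) - t (n+1) * phi s t α (n+1) := by
  show cont _ _ _ ((n+1)+2) = _
  rw [cont]
  show (α + s (n+1+1)) * phi s t α (n+1+1) - 1 * t (n+1) * phi s t α (n+1) = _
  rw [show n+1+1 = n+2 from rfl]
  ring


lemma sh_eq (tc α β : ℝ) (n : ℕ) :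
    scaledHankel3 s t tc α β n
      = (t 0) ^ (-((n : ℤ) - 1)) * tc ^ (-(((n - 1).choose 2 : ℕ) : ℤ))
          * (Amat s t α β n).det := by
  simp only [scaledHankel3, Amat, Mn, Nat.cast_zero]

lemma sh_succ (tc α β : ℝ) (n : ℕ) :
    scaledHankel3 s t tc α β (n+1)
      = ((t 0) ^ n)⁻¹ * (tc ^ (n.choose 2))⁻¹ * (Amat s t α β (n+1)).det := by
  rw [sh_eq]
  have h1 : (-((((n+1 : ℕ)) : ℤ) - 1)) = -(n : ℤ) := by push_cast; ring
  have h2 : (n+1) - 1 = n := by omega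
  rw [h1, h2, zpow_neg, zpow_neg, zpow_natCast, zpow_natCast]

lemma det_eq (tc α β : ℝ) (ht0 : t 0 ≠ 0) (htc : tc ≠ 0) (n : ℕ) :
    (Amat s t α β (n+1)).det
      = t 0 ^ n * tc ^ (n.choose 2) * scaledHankel3 s t tc α β (n+1) := by
  rw [sh_succ]
  field_simp

lemma hp_eq (tc : ℝ) (htt : ∀ i, 1 ≤ i → t i = tc) (k : ℕ) :
    hp t (k+1) = t 0 * tc ^ k := by
  induction k with
  | zero => simp [hp]
  | succ k ih =>
      rw [hp_succ, ih, htt (k+1) (by omega), pow_succ]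
      ring

lemma Pp_eq (tc : ℝ) (htt : ∀ i, 1 ≤ i → t i = tc) (n : ℕ) :
    Pp t (n+1) = t 0 ^ n * tc ^ (n.choose 2) := by
  induction n with
  | zero => simp [Pp, hp]
  | succ n ih =>
      rw [Pp, Finset.prod_range_succ, ← Pp, ih, hp_eq t tc htt n,
        Nat.choose_succ_succ, Nat.choose_one_right, pow_add, pow_succ]
      ring

lemma Drec (tc α β : ℝ) (ht0 : t 0 ≠ 0) (htc : tc ≠ 0)
    (htt : ∀ i, 1 ≤ i → t i = tc) (n : ℕ) :
    scaledHankel3 s t tc α β (n+2)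
      = tc * scaledHankel3 s t tc α β (n+1) + phi s t α (n+2) * phi s t β (n+2) := by
  have h1 := master s t α β (n+1)
  rw [det_eq s t tc α β ht0 htc (n+1), det_eq s t tc α β ht0 htc n,
      Pp_eq t tc htt (n+1), hp_eq t tc htt (n+1),
      Nat.choose_succ_succ, Nat.choose_one_right] at h1
  have hne : (t 0 ^ (n+1) * tc ^ (n + n.choose 2)) ≠ 0 :=
    mul_ne_zero (pow_ne_zero _ ht0) (pow_ne_zero _ htc)
  refine mul_left_cancel₀ hne ?_
  linear_combination h1

lemma D1 (tc α β : ℝ) :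
    scaledHankel3 s t tc α β 1 = t 0 + (α + s 0) * (β + s 0) := by
  rw [sh_succ]
  have h0 := master s t α β 0
  rw [Matrix.det_fin_zero] at h0
  rw [h0, phi_one, phi_one]
  have hPp : Pp t 1 = 1 := by simp [Pp, hp]
  have hhp : hp t 1 = t 0 := by simp [hp]
  rw [hPp, hhp]
  norm_num
  ring

end CK

/-- Corollary 4: if `s_i = s` and `t_i = t` for `i ≥ 1` (`t ≠ 0`), the scaled Hankel
determinants `D_n` satisfy a linear recurrence of order 4 with constant coefficients. -/
theorem scaledHankel3_linear_recurrence (s t : ℕ → ℝ) (ht : ∀ n, t n ≠ 0)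
    (sc tc : ℝ) (htc : tc ≠ 0)
    (hs : ∀ i, 1 ≤ i → s i = sc) (htt : ∀ i, 1 ≤ i → t i = tc)
    (α β : ℝ) :
    ∃ c₁ c₂ c₃ c₄ : ℝ, ∀ n : ℕ, 5 ≤ n →
      scaledHankel3 s t tc α β n
        = c₁ * scaledHankel3 s t tc α β (n - 1)
          + c₂ * scaledHankel3 s t tc α β (n - 2)
          + c₃ * scaledHankel3 s t tc α β (n - 3)
          + c₄ * scaledHankel3 s t tc α β (n - 4) := by
  have ht0 := ht 0
  refine ⟨(α+sc)*(β+sc), 2*tc^2 - tc*((α+sc)^2+(β+sc)^2), (α+sc)*(β+sc)*tc^2, -tc^4, ?_⟩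
  have hφrec : ∀ (γ:ℝ) (k:ℕ), CK.phi s t γ (k+3)
      = (γ+sc) * CK.phi s t γ (k+2) - tc * CK.phi s t γ (k+1) := by
    intro γ k
    rw [CK.phi_rec, hs (k+2) (by omega), htt (k+1) (by omega)]
  have hφ2 : ∀ γ:ℝ, CK.phi s t γ 2 = (γ+sc) * (γ + s 0) - t 0 := by
    intro γ; rw [CK.phi_two, hs 1 le_rfl]
  have hD : ∀ k, scaledHankel3 s t tc α β (k+2)
      = tc * scaledHankel3 s t tc α β (k+1)
        + CK.phi s t α (k+2) * CK.phi s t β (k+2) :=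
    CK.Drec s t tc α β ht0 htc htt
  have hD1 := CK.D1 s t tc α β
  have key : ∀ m : ℕ, scaledHankel3 s t tc α β (m+5)
      = (α+sc)*(β+sc) * scaledHankel3 s t tc α β (m+4)
        + (2*tc^2 - tc*((α+sc)^2+(β+sc)^2)) * scaledHankel3 s t tc α β (m+3)
        + (α+sc)*(β+sc)*tc^2 * scaledHankel3 s t tc α β (m+2)
        + (-tc^4) * scaledHankel3 s t tc α β (m+1) := by
    intro m
    induction m with
    | zero =>
        have e5 := hD 3
        have e4 := hD 2
        have e3 := hD 1
        have e2 := hD 0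
        have p5a := hφrec α 2
        have p4a := hφrec α 1
        have p3a := hφrec α 0
        have p5b := hφrec β 2
        have p4b := hφrec β 1
        have p3b := hφrec β 0
        norm_num at e5 e4 e3 e2 p5a p4a p3a p5b p4b p3b
        simp only [zero_add]
        rw [e5, e4, e3, e2, hD1, p5a, p4a, p3a, p5b, p4b, p3b, hφ2 α, hφ2 β,
          CK.phi_one, CK.phi_one]
        ring
    | succ m ih =>
        have hd6 : scaledHankel3 s t tc α β (m+6)
            = tc * scaledHankel3 s t tc α β (m+5)
              + CK.phi s t α (m+6) * CK.phi s t β (m+6) := by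
          have := hD (m+4)
          rw [show m+4+2 = m+6 by omega, show m+4+1 = m+5 by omega] at this
          exact this
        have hd5 : scaledHankel3 s t tc α β (m+5)
            = tc * scaledHankel3 s t tc α β (m+4)
              + CK.phi s t α (m+5) * CK.phi s t β (m+5) := by
          have := hD (m+3)
          rw [show m+3+2 = m+5 by omega, show m+3+1 = m+4 by omega] at this
          exact this
        have hd4 : scaledHankel3 s t tc α β (m+4)
            = tc * scaledHankel3 s t tc α β (m+3)
              + CK.phi s t α (m+4) * CK.phi s t β (m+4) := by
          have := hD (m+2)
          rw [show m+2+2 = m+4 by omega, show m+2+1 = m+3 by omega] at this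
          exact this
        have hd3 : scaledHankel3 s t tc α β (m+3)
            = tc * scaledHankel3 s t tc α β (m+2)
              + CK.phi s t α (m+3) * CK.phi s t β (m+3) := by
          have := hD (m+1)
          rw [show m+1+2 = m+3 by omega, show m+1+1 = m+2 by omega] at this
          exact this
        have hd2 : scaledHankel3 s t tc α β (m+2)
            = tc * scaledHankel3 s t tc α β (m+1)
              + CK.phi s t α (m+2) * CK.phi s t β (m+2) := by
          exact hD m
        have hq : ∀ (γ:ℝ) (j:ℕ), CK.phi s t γ (j+6)
            = (γ+sc) * CK.phi s t γ (j+5) - tc * CK.phi s t γ (j+4) := by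
          intro γ j
          have := hφrec γ (j+3)
          rw [show j+3+3 = j+6 by omega, show j+3+2 = j+5 by omega,
            show j+3+1 = j+4 by omega] at this
          exact this
        have hq5 : ∀ (γ:ℝ), CK.phi s t γ (m+5)
            = (γ+sc) * CK.phi s t γ (m+4) - tc * CK.phi s t γ (m+3) := by
          intro γ
          have := hφrec γ (m+2)
          rw [show m+2+3 = m+5 by omega, show m+2+2 = m+4 by omega,
            show m+2+1 = m+3 by omega] at this
          exact this
        have hq4 : ∀ (γ:ℝ), CK.phi s t γ (m+4)
            = (γ+sc) * CK.phi s t γ (m+3) - tc * CK.phi s t γ (m+2) := by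
          intro γ
          have := hφrec γ (m+1)
          rw [show m+1+3 = m+4 by omega, show m+1+2 = m+3 by omega,
            show m+1+1 = m+2 by omega] at this
          exact this
        have hE : CK.phi s t α (m+6) * CK.phi s t β (m+6)
            = (α+sc)*(β+sc) * (CK.phi s t α (m+5) * CK.phi s t β (m+5))
              + (2*tc^2 - tc*((α+sc)^2+(β+sc)^2))
                  * (CK.phi s t α (m+4) * CK.phi s t β (m+4))
              + (α+sc)*(β+sc)*tc^2 * (CK.phi s t α (m+3) * CK.phi s t β (m+3))
              + (-tc^4) * (CK.phi s t α (m+2) * CK.phi s t β (m+2)) := by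
          rw [hq α m, hq β m, hq5 α, hq5 β, hq4 α, hq4 β]
          ring
        rw [show m+1+5 = m+6 by omega, show m+1+4 = m+5 by omega,
          show m+1+3 = m+4 by omega, show m+1+2 = m+3 by omega,
          show m+1+1 = m+2 by omega]
        linear_combination hd6 + tc * ih + hE - ((α+sc)*(β+sc)) * hd5
          - (2*tc^2 - tc*((α+sc)^2+(β+sc)^2)) * hd4
          - ((α+sc)*(β+sc)*tc^2) * hd3 - (-tc^4) * hd2
  intro n hn
  obtain ⟨m, rfl⟩ : ∃ m, n = m + 5 := ⟨n - 5, by omega⟩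
  rw [show m+5-1 = m+4 by omega, show m+5-2 = m+3 by omega,
    show m+5-3 = m+2 by omega, show m+5-4 = m+1 by omega]
  have := key m
  linarith [key m]
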